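/- If a reward machine satisfies the self-loop condition (for all states u, u' and labels σ, δu(u', σ) = u implies δu(u, σ) = u), then the final state reached by processing any trace equals the final state reached by processing its compression. -/

import Mathlib

namespace List

variable {α β : Type*} [DecidableEq α]

theorem foldl_destutter'_ne (f : β → α → β) (hf : ∀ b a, f (f b a) a = f b a) :
    ∀ (l : List α) (a : α) (b : β), (l.destutter' (· ≠ ·) a).foldl f b = (a :: l).foldl f b
  | [], _, _ => rfl
  | c :: l, a, b => by
    by_cases hac : a = c
    · subst hac
      rw [destutter'_cons_neg l (not_not_intro rfl), foldl_destutter'_ne f hf l, foldl_cons,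
        foldl_cons, foldl_cons, hf]
    · rw [destutter'_cons_pos l hac, foldl_cons, foldl_destutter'_ne f hf l]
      rfl

theorem foldl_destutter_ne (f : β → α → β) (hf : ∀ b a, f (f b a) a = f b a)
    (l : List α) (b : β) : (l.destutter (· ≠ ·)).foldl f b = l.foldl f b := by
  cases l with
  | nil => rfl
  | cons a l => exact foldl_destutter'_ne f hf l a b

end List

/-- If a reward machine satisfies the self-loop condition
(`δu u' σ = u → δu u σ = u`), then the final state reached by processing any trace
equals the final state reached by processing its compression (consecutive duplicates
removed). -/
theorem stmt3 {U Sigma : Type} [DecidableEq Sigma] (δu : U → Sigma → U) (u0 : U)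
    (hself : ∀ (u u' : U) (σ : Sigma), δu u' σ = u → δu u σ = u)
    (τ : List Sigma) :
    τ.foldl δu u0 = (List.destutter (· ≠ ·) τ).foldl δu u0 :=
  (List.foldl_destutter_ne δu (fun u σ => hself _ u σ rfl) τ u0).symm
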